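/- (McDiarmid/Karp) Let G be any finite graph and x, y ∈ V(G). The probability that x and y are connected when each edge of G is independently present with probability 1/2 equals the probability that there is a directed path from x to y when each edge of G is independently given one of its two orientations with probability 1/2. -/

import Mathlib

open scoped Classical

noncomputable section

/-- Indicator of a proposition, as a real number. -/
def pInd (P : Prop) : ℝ := if P then 1 else 0

variable {V : Type}

/-- The spanning subgraph of `G` consisting of the open edges of the percolation
configuration `ω`. -/
def openSubgraph (G : SimpleGraph V) (ω : Sym2 V → Bool) : SimpleGraph V where
  Adj a b := G.Adj a b ∧ ω s(a, b) = true
  symm := by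
    constructor
    intro a b ⟨h1, h2⟩
    exact ⟨h1.symm, by rwa [Sym2.eq_swap]⟩
  loopless := ⟨fun a ⟨h, _⟩ => G.irrefl h⟩

/-- Connection probability when each edge is present independently with probability 1/2. -/
def Phalf [Fintype V] [DecidableEq V] (G : SimpleGraph V) (x y : V) : ℝ :=
  (∑ ω : Sym2 V → Bool, pInd ((openSubgraph G ω).Reachable x y)) /
    2 ^ Fintype.card (Sym2 V)

/-- Given an orientation `d` of the edges (the edge `e` points from `e.out.1` to
`e.out.2` when `d e = true`, and the other way when `d e = false`), `dirStep G d a b`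
says that there is an edge of `G` directed from `a` to `b`. -/
def dirStep (G : SimpleGraph V) (d : Sym2 V → Bool) (a b : V) : Prop :=
  G.Adj a b ∧ ((s(a, b)).out = (a, b) ∧ d s(a, b) = true ∨
    (s(a, b)).out = (b, a) ∧ d s(a, b) = false)

/-- Probability that there is a directed path from `x` to `y` when every edge of `G` is
given one of its two orientations independently with probability 1/2. -/
def Pdir [Fintype V] [DecidableEq V] (G : SimpleGraph V) (x y : V) : ℝ :=
  (∑ d : Sym2 V → Bool, pInd (Relation.ReflTransGen (dirStep G d) x y)) /
    2 ^ Fintype.card (Sym2 V)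

/-! Explore the cluster of `x` one edge at a time, revealing the state of an edge only when it
leaves the set of vertices reached so far. Such an edge `{u, v}`, with `u` reached and `v` not,
lets the exploration pass from `u` to `v` with probability 1/2 in both models: in percolation
when the edge is open, in the oriented model when it points from `u` to `v`. The arc `v → u`
never matters, since it points into the reached set. Hence the explorations of the two models
have the same law, and so have the events that they reach `y`. -/

open Function Relation

theorem Fintype.sum_update_true_add_update_false {ι M : Type*} [Fintype ι] [DecidableEq ι]
    [AddCommMonoid M] (i : ι) (F : (ι → Bool) → M) :
    ∑ σ : ι → Bool, (F (update σ i true) + F (update σ i false)) = 2 • ∑ σ, F σ := by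
  set flip : (ι → Bool) → ι → Bool := fun σ => update σ i (!σ i)
  have hflip : Involutive flip := fun σ => by simp [flip]
  have hpair (σ : ι → Bool) :
      F (update σ i true) + F (update σ i false) = F σ + F (flip σ) := by
    cases h : σ i
    · rw [← h, update_eq_self, add_comm]; simp [flip, h]
    · rw [← h, update_eq_self]; simp [flip, h]
  simp only [hpair, Finset.sum_add_distrib, two_nsmul, hflip.bijective.sum_comp F]

theorem Relation.reflTransGen_or_arc_iff {α : Type*} {r : α → α → Prop} {x u v y : α}
    (hu : ReflTransGen r x u) :
    ReflTransGen (fun a b => r a b ∨ a = v ∧ b = u) x y ↔ ReflTransGen r x y := by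
  refine ⟨fun h => ?_, ReflTransGen.mono (fun _ _ => Or.inl) _ _⟩
  induction h with
  | refl => exact .refl
  | tail _ hab ih =>
    rcases hab with hab | ⟨-, rfl⟩
    · exact ih.tail hab
    · exact hu

theorem Sym2.out_mk_eq_or {α : Type*} (u v : α) :
    s(u, v).out = (u, v) ∨ s(u, v).out = (v, u) := by
  have h : s(s(u, v).out.1, s(u, v).out.2) = s(u, v) := Quot.out_eq _
  rcases Sym2.eq_iff.mp h with ⟨h1, h2⟩ | ⟨h1, h2⟩
  · exact Or.inl (Prod.ext h1 h2)
  · exact Or.inr (Prod.ext h1 h2)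

/-- `M σ a b` says that the arc `a → b` is present in the configuration `σ`. During the
exploration the arcs `D` are already revealed and the edges of `A` are still random. -/
def exploreStep (M : (Sym2 V → Bool) → V → V → Prop) (A : Finset (Sym2 V))
    (D : V → V → Prop) (σ : Sym2 V → Bool) (a b : V) : Prop :=
  D a b ∨ (s(a, b) ∈ A ∧ M σ a b)

theorem reflTransGen_exploreStep_iff_of_closed {M : (Sym2 V → Bool) → V → V → Prop}
    {A : Finset (Sym2 V)} {D : V → V → Prop} {x y : V}
    (hA : ∀ a b, s(a, b) ∈ A → ReflTransGen D x a → ReflTransGen D x b) (σ : Sym2 V → Bool) :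
    ReflTransGen (exploreStep M A D σ) x y ↔ ReflTransGen D x y := by
  refine ⟨fun h => ?_, ReflTransGen.mono (fun _ _ => Or.inl) _ _⟩
  induction h with
  | refl => exact .refl
  | tail _ hab ih =>
    rcases hab with hab | ⟨hab, -⟩
    · exact ih.tail hab
    · exact hA _ _ hab ih

def percolationArcs (ω : Sym2 V → Bool) (a b : V) : Prop := ω s(a, b) = true

def orientationArcs (d : Sym2 V → Bool) (a b : V) : Prop :=
  (s(a, b)).out = (a, b) ∧ d s(a, b) = true ∨ (s(a, b)).out = (b, a) ∧ d s(a, b) = false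

theorem exploreStep_percolationArcs (G : SimpleGraph V) [Fintype G.edgeSet]
    (ω : Sym2 V → Bool) :
    exploreStep percolationArcs G.edgeFinset (fun _ _ => False) ω = (openSubgraph G ω).Adj := by
  funext a b
  simp [exploreStep, percolationArcs, openSubgraph]

theorem exploreStep_orientationArcs (G : SimpleGraph V) [Fintype G.edgeSet]
    (d : Sym2 V → Bool) :
    exploreStep orientationArcs G.edgeFinset (fun _ _ => False) d = dirStep G d := by
  funext a b
  simp [exploreStep, orientationArcs, dirStep]

section FairArcModel

variable [DecidableEq V]

structure IsFairArcModel (M : (Sym2 V → Bool) → V → V → Prop) : Prop where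
  of_eq_at_edge : ∀ σ τ a b, σ s(a, b) = τ s(a, b) → M σ a b → M τ a b
  update_true_iff_not_update_false : ∀ σ u v, u ≠ v →
    (M (update σ s(u, v) true) u v ↔ ¬ M (update σ s(u, v) false) u v)

theorem isFairArcModel_percolationArcs : IsFairArcModel (percolationArcs (V := V)) where
  of_eq_at_edge σ τ a b h := by simp [percolationArcs, h]
  update_true_iff_not_update_false σ u v _ := by simp [percolationArcs]

theorem isFairArcModel_orientationArcs : IsFairArcModel (orientationArcs (V := V)) where
  of_eq_at_edge σ τ a b h := by simp [orientationArcs, h]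
  update_true_iff_not_update_false σ u v huv := by
    rcases Sym2.out_mk_eq_or u v with h | h <;> simp [orientationArcs, h, huv, huv.symm]

/-- `2 ^ |Sym2 V|` times the probability that the exploration reaches `y` from `x`. -/
def reachCount [Fintype V] (M : (Sym2 V → Bool) → V → V → Prop)
    (A : Finset (Sym2 V)) (D : V → V → Prop) (x y : V) : ℝ :=
  ∑ σ : Sym2 V → Bool, pInd (ReflTransGen (exploreStep M A D σ) x y)

variable {M : (Sym2 V → Bool) → V → V → Prop} {A : Finset (Sym2 V)} {D : V → V → Prop}
  {x y : V}

theorem reflTransGen_exploreStep_update_iff (hM : IsFairArcModel M) {u v : V}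
    (he : s(u, v) ∈ A) (hu : ReflTransGen D x u) (σ : Sym2 V → Bool) (β : Bool) :
    ReflTransGen (exploreStep M A D (update σ s(u, v) β)) x y ↔
      ReflTransGen (exploreStep M (A.erase s(u, v))
        (fun a b => D a b ∨ M (update σ s(u, v) β) u v ∧ a = u ∧ b = v) σ) x y := by
  set T := exploreStep M (A.erase s(u, v))
    (fun a b => D a b ∨ M (update σ s(u, v) β) u v ∧ a = u ∧ b = v) σ
  have hTx : ReflTransGen T x u := ReflTransGen.mono (fun _ _ h => Or.inl (Or.inl h)) _ _ hu
  have hσ {a b : V} (hab : s(a, b) ≠ s(u, v)) : update σ s(u, v) β s(a, b) = σ s(a, b) :=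
    update_of_ne hab _ _
  rw [← reflTransGen_or_arc_iff (v := v) hTx]
  constructor
  · refine ReflTransGen.mono (fun a b hab => ?_) _ _
    rcases hab with hab | ⟨hmem, hab⟩
    · exact Or.inl (Or.inl (Or.inl hab))
    by_cases he' : s(a, b) = s(u, v)
    · rcases Sym2.eq_iff.mp he' with ⟨rfl, rfl⟩ | ⟨rfl, rfl⟩
      · exact Or.inl (Or.inl (Or.inr ⟨hab, rfl, rfl⟩))
      · exact Or.inr ⟨rfl, rfl⟩
    · exact Or.inl (Or.inr ⟨Finset.mem_erase.mpr ⟨he', hmem⟩,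
        hM.of_eq_at_edge _ _ _ _ (hσ he') hab⟩)
  · refine fun h => ReflTransGen.mono (fun a b hab => ?_) _ _ ((reflTransGen_or_arc_iff hTx).mp h)
    rcases hab with (hab | ⟨hab, rfl, rfl⟩) | ⟨hmem, hab⟩
    · exact Or.inl hab
    · exact Or.inr ⟨he, hab⟩
    · obtain ⟨he', hmem⟩ := Finset.mem_erase.mp hmem
      exact Or.inr ⟨hmem, hM.of_eq_at_edge _ _ _ _ (hσ he').symm hab⟩

theorem two_mul_reachCount [Fintype V] (hM : IsFairArcModel M) {u v : V}
    (he : s(u, v) ∈ A) (hu : ReflTransGen D x u) (huv : u ≠ v) :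
    2 * reachCount M A D x y = reachCount M (A.erase s(u, v))
      (fun a b => D a b ∨ a = u ∧ b = v) x y + reachCount M (A.erase s(u, v)) D x y := by
  have hsplit := Fintype.sum_update_true_add_update_false s(u, v)
    fun σ => pInd (ReflTransGen (exploreStep M A D σ) x y)
  rw [nsmul_eq_mul, Nat.cast_ofNat] at hsplit
  rw [reachCount, ← hsplit, reachCount, reachCount, ← Finset.sum_add_distrib]
  refine Finset.sum_congr rfl fun σ _ => ?_
  simp only [reflTransGen_exploreStep_update_iff hM he hu]
  by_cases h : M (update σ s(u, v) true) u v
  · have h' := (hM.update_true_iff_not_update_false σ u v huv).mp h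
    simp [h, h']
  · have h' := not_not.mp (mt (hM.update_true_iff_not_update_false σ u v huv).mpr h)
    simp [h, h', add_comm]

theorem reachCount_eq_of_isFairArcModel [Fintype V] {M' : (Sym2 V → Bool) → V → V → Prop}
    (hM : IsFairArcModel M) (hM' : IsFairArcModel M') (A : Finset (Sym2 V))
    (D : V → V → Prop) : reachCount M A D x y = reachCount M' A D x y := by
  induction A using Finset.strongInduction generalizing D with
  | H A ih =>
  by_cases hA : ∃ u v, s(u, v) ∈ A ∧ ReflTransGen D x u ∧ ¬ ReflTransGen D x v
  · obtain ⟨u, v, he, hu, hv⟩ := hA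
    have huv : u ≠ v := by rintro rfl; exact hv hu
    have h := two_mul_reachCount (y := y) hM he hu huv
    have h' := two_mul_reachCount (y := y) hM' he hu huv
    rw [ih _ (Finset.erase_ssubset he), ih _ (Finset.erase_ssubset he)] at h
    linarith
  · push Not at hA
    simp only [reachCount, reflTransGen_exploreStep_iff_of_closed hA]

end FairArcModel

/-- McDiarmid/Karp: percolation with `p = 1/2` and uniformly random orientation give
the same connection probabilities. -/
theorem percolation_half_eq_random_orientation [Fintype V] [DecidableEq V]
    (G : SimpleGraph V) (x y : V) : Phalf G x y = Pdir G x y := by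
  have hperc : Phalf G x y = reachCount percolationArcs G.edgeFinset (fun _ _ => False) x y /
      2 ^ Fintype.card (Sym2 V) := by
    simp only [Phalf, reachCount, exploreStep_percolationArcs,
      SimpleGraph.reachable_iff_reflTransGen]
  have hdir : Pdir G x y = reachCount orientationArcs G.edgeFinset (fun _ _ => False) x y /
      2 ^ Fintype.card (Sym2 V) := by
    simp only [Pdir, reachCount, exploreStep_orientationArcs]
  rw [hperc, hdir, reachCount_eq_of_isFairArcModel isFairArcModel_percolationArcs
    isFairArcModel_orientationArcs]

end
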